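/- arXiv:2503.00820 — 2 statements merged into one kernel-verified Lean document; each statement's English description precedes it below -/
import Mathlib

section
/- For two elements α, β of AO_n of rank n-1, α and β are J-related in AO_n if and only if d(α) and d(β) have the same parity. -/
/-- Partial transformations on `Fin n`, represented as `Option`-valued maps. -/
abbrev PT (n : ℕ) := Fin n → Option (Fin n)

/-- Left-to-right composition of partial maps: `x (pcomp f g) = (x f) g`. -/
def pcomp {n : ℕ} (f g : PT n) : PT n := fun x => (f x).bind g

/-- The identity partial map. -/
def pid (n : ℕ) : PT n := fun x => some x

instance PTMonoid (n : ℕ) : Monoid (PT n) where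
  mul := pcomp
  one := pid n
  mul_assoc f g h := funext fun x => by
    show ((f x).bind g).bind h = (f x).bind fun y => (g y).bind h
    cases f x <;> rfl
  one_mul f := rfl
  mul_one f := funext fun x => by
    show (f x).bind (fun y => some y) = f x
    cases f x <;> rfl

/-- `f` is injective on its domain. -/
def pInj {n : ℕ} (f : PT n) : Prop := ∀ x y a, f x = some a → f y = some a → x = y

/-- The domain of a partial map. -/
def pDom {n : ℕ} (f : PT n) : Finset (Fin n) := Finset.univ.filter fun x => (f x).isSome

/-- The image of a partial map. -/
def pIm {n : ℕ} (f : PT n) : Finset (Fin n) := Finset.univ.filter fun b => ∃ x, f x = some b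

/-- The rank of a partial map is the size of its domain. -/
def prank {n : ℕ} (f : PT n) : ℕ := (pDom f).card

/-- Order-preserving partial maps. -/
def orderPres {n : ℕ} (f : PT n) : Prop :=
  ∀ x y a b, f x = some a → f y = some b → x ≤ y → a ≤ b

/-- Order-reversing partial maps. -/
def orderRev {n : ℕ} (f : PT n) : Prop :=
  ∀ x y a b, f x = some a → f y = some b → x ≤ y → b ≤ a

/-- Monotone partial maps. -/
def isMonotonePT {n : ℕ} (f : PT n) : Prop := orderPres f ∨ orderRev f

/-- The permutation `σ` extends the partial map `f`. -/
def extendsTo {n : ℕ} (σ : Equiv.Perm (Fin n)) (f : PT n) : Prop :=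
  ∀ x a, f x = some a → σ x = a

/-- Membership in the alternating inverse monoid `AI_n`: an injective partial map of
rank `≤ n - 2`, or one that extends to an even permutation. -/
def inAI {n : ℕ} (f : PT n) : Prop :=
  pInj f ∧ (prank f + 2 ≤ n ∨
    ∃ σ : Equiv.Perm (Fin n), σ ∈ alternatingGroup (Fin n) ∧ extendsTo σ f)

/-- `AO_n = AI_n ∩ POI_n`. -/
def AO (n : ℕ) : Set (PT n) := {f | orderPres f ∧ inAI f}

/-- `AM_n = AI_n ∩ PMI_n`. -/
def AM (n : ℕ) : Set (PT n) := {f | isMonotonePT f ∧ inAI f}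

/-- Green's `J`-relation relative to a submonoid-like subset `S` (containing the identity):
`a J b` iff each lies in the two-sided principal ideal of the other. -/
def JRelIn {n : ℕ} (S : Set (PT n)) (a b : PT n) : Prop :=
  (∃ u v, u ∈ S ∧ v ∈ S ∧ a = u * b * v) ∧ (∃ u v, u ∈ S ∧ v ∈ S ∧ b = u * a * v)

/-!
An order-preserving partial injection of `Fin (m + 1)` with domain `univ \ {d}` and image
`univ \ {e}` is forced to be `d.succAbove j ↦ e.succAbove j`. Its only extension to a
permutation is `(cycleRange e)⁻¹ * cycleRange d`, of sign `(-1) ^ (d + e)`, so it lies in `AO`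
iff `d ≡ e (mod 2)`. These maps compose like a groupoid, which gives `a = u * b * v` when the
parities agree. Conversely, if `a = u * b * v` with `u ∈ AO`, then `u` maps `univ \ {d(a)}`
monotonically into `univ \ {d(b)}`, hence is of the same forced shape there, and any even
permutation extending it forces `d(a) ≡ d(b) (mod 2)`.
-/

open Equiv

section PartialMaps

variable {n : ℕ}

@[simp]
lemma PT.mul_apply (f g : PT n) (x : Fin n) : (f * g) x = (f x).bind g := rfl

lemma mem_pDom {f : PT n} {x : Fin n} : x ∈ pDom f ↔ (f x).isSome := by
  simp [pDom]

lemma mem_pDom_mul {f g : PT n} {x : Fin n} :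
    x ∈ pDom (f * g) ↔ ∃ y, f x = some y ∧ y ∈ pDom g := by
  simp only [mem_pDom, PT.mul_apply]
  cases f x <;> simp

lemma pDom_mul_subset (f g : PT n) : pDom (f * g) ⊆ pDom f := fun x hx => by
  obtain ⟨y, hy, -⟩ := mem_pDom_mul.1 hx
  simp [mem_pDom, hy]

end PartialMaps

section Shift

variable {m : ℕ}

lemma PT.ext_succAbove {f g : PT (m + 1)} (d : Fin (m + 1)) (hd : f d = g d)
    (h : ∀ j, f (d.succAbove j) = g (d.succAbove j)) : f = g := by
  funext x
  rcases Fin.eq_self_or_eq_succAbove d x with rfl | ⟨j, rfl⟩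
  exacts [hd, h j]

def shiftPerm (d e : Fin (m + 1)) : Perm (Fin (m + 1)) :=
  e.cycleRange.symm * d.cycleRange

@[simp]
lemma shiftPerm_self (d e : Fin (m + 1)) : shiftPerm d e d = e := by
  simp [shiftPerm, Fin.cycleRange_self, Fin.cycleRange_symm_zero]

@[simp]
lemma shiftPerm_succAbove (d e : Fin (m + 1)) (j : Fin m) :
    shiftPerm d e (d.succAbove j) = e.succAbove j := by
  rw [shiftPerm, Perm.mul_apply, Fin.cycleRange_succAbove, Equiv.symm_apply_eq,
    Fin.cycleRange_succAbove]

lemma eq_shiftPerm_of_succAbove {σ : Perm (Fin (m + 1))} {d e : Fin (m + 1)}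
    (h : ∀ j, σ (d.succAbove j) = e.succAbove j) : σ = shiftPerm d e := by
  ext1 x
  rcases Fin.eq_self_or_eq_succAbove d x with rfl | ⟨j, rfl⟩
  · rw [shiftPerm_self]
    by_contra hne
    obtain ⟨j, hj⟩ := Fin.exists_succAbove_eq hne
    exact Fin.ne_succAbove x j (σ.injective (by rw [h, hj]))
  · rw [h, shiftPerm_succAbove]

lemma sign_shiftPerm (d e : Fin (m + 1)) :
    Perm.sign (shiftPerm d e) = (-1) ^ (d.val + e.val) := by
  simp [shiftPerm, Fin.sign_cycleRange, pow_add, mul_comm]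

lemma shiftPerm_mem_alternatingGroup_iff {d e : Fin (m + 1)} :
    shiftPerm d e ∈ alternatingGroup (Fin (m + 1)) ↔ d.val % 2 = e.val % 2 := by
  rw [Perm.mem_alternatingGroup, sign_shiftPerm, neg_one_pow_eq_one_iff_even (by decide),
    Nat.even_add, Nat.even_iff, Nat.even_iff]
  omega

def shiftPT (d e : Fin (m + 1)) : PT (m + 1) :=
  fun x => if x = d then none else some (shiftPerm d e x)

@[simp]
lemma shiftPT_self (d e : Fin (m + 1)) : shiftPT d e d = none := if_pos rfl

@[simp]
lemma shiftPT_succAbove (d e : Fin (m + 1)) (j : Fin m) :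
    shiftPT d e (d.succAbove j) = some (e.succAbove j) := by
  simp [shiftPT, Fin.succAbove_ne]

lemma shiftPT_mul_shiftPT (d e c : Fin (m + 1)) : shiftPT d e * shiftPT e c = shiftPT d c :=
  PT.ext_succAbove d (by simp) (by simp)

lemma orderPres_shiftPT (d e : Fin (m + 1)) : orderPres (shiftPT d e) := by
  intro x y a b hx hy hxy
  rcases Fin.eq_self_or_eq_succAbove d x with rfl | ⟨i, rfl⟩
  · simp at hx
  rcases Fin.eq_self_or_eq_succAbove d y with rfl | ⟨j, rfl⟩
  · simp at hy
  simp only [shiftPT_succAbove, Option.some_inj] at hx hy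
  rw [← hx, ← hy, Fin.succAbove_le_succAbove_iff]
  exact Fin.succAbove_le_succAbove_iff.1 hxy

lemma extendsTo_shiftPerm_shiftPT (d e : Fin (m + 1)) :
    extendsTo (shiftPerm d e) (shiftPT d e) := by
  intro x a hx
  unfold shiftPT at hx
  split_ifs at hx
  exact Option.some_inj.1 hx

lemma pInj_shiftPT (d e : Fin (m + 1)) : pInj (shiftPT d e) := fun x y a hx hy =>
  (shiftPerm d e).injective <| by
    rw [extendsTo_shiftPerm_shiftPT d e x a hx, extendsTo_shiftPerm_shiftPT d e y a hy]

end Shift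

section Parity

variable {m : ℕ}

lemma Fin.eq_succAbove_of_strictMono {g : Fin m → Fin (m + 1)} (hg : StrictMono g)
    {e : Fin (m + 1)} (he : ∀ j, g j ≠ e) : g = e.succAbove := by
  have hmem : ∀ j, g j ∈ ({e}ᶜ : Finset (Fin (m + 1))) := by simpa using he
  rw [Finset.orderEmbOfFin_unique (by simp [Finset.card_compl]) hmem hg,
    Finset.orderEmbOfFin_compl_singleton_eq_succAboveOrderEmb]
  rfl

lemma eq_succAbove_of_orderPres {f : PT (m + 1)} (hp : orderPres f) (hi : pInj f)
    {d e : Fin (m + 1)} {g : Fin m → Fin (m + 1)} (hg : ∀ j, f (d.succAbove j) = some (g j))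
    (he : ∀ j, g j ≠ e) : g = e.succAbove := by
  refine Fin.eq_succAbove_of_strictMono (fun i j hij => ?_) he
  refine lt_of_le_of_ne (hp _ _ _ _ (hg i) (hg j) (Fin.strictMono_succAbove d hij).le) ?_
  intro hgij
  exact hij.ne (Fin.succAbove_right_injective (hi _ _ _ (hg i) (hgij ▸ hg j)))

lemma exists_eq_shiftPT {f : PT (m + 1)} (hp : orderPres f) (hi : pInj f) {d : Fin (m + 1)}
    (hdom : pDom f = Finset.univ.erase d) : ∃ e, f = shiftPT d e := by
  have hf : ∀ x, (f x).isSome ↔ x ≠ d := fun x => by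
    rw [← mem_pDom, hdom]
    simp
  choose g hg using fun j => Option.isSome_iff_exists.1 ((hf (d.succAbove j)).2 (Fin.succAbove_ne d j))
  obtain ⟨e, he⟩ : ∃ e, ∀ j, g j ≠ e := by
    by_contra! hsurj
    simpa using Fintype.card_le_of_surjective g hsurj
  refine ⟨e, PT.ext_succAbove d ?_ fun j => ?_⟩
  · simpa using (hf d).not
  · rw [hg, eq_succAbove_of_orderPres hp hi hg he, shiftPT_succAbove]

/-- The rank condition of `AI` fails at rank `m`, so such an `f` extends to an even permutation,
which can only be `shiftPerm d e`. -/
lemma mod_two_eq_of_inAI {f : PT (m + 1)} (hf : inAI f) {d e : Fin (m + 1)}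
    (h : ∀ j, f (d.succAbove j) = some (e.succAbove j)) : d.val % 2 = e.val % 2 := by
  obtain ⟨-, hrank | ⟨σ, hσ, hext⟩⟩ := hf
  · have hsub : Finset.univ.erase d ⊆ pDom f := fun x hx => by
      obtain ⟨j, rfl⟩ := Fin.exists_succAbove_eq (Finset.mem_erase.1 hx).1
      simp [mem_pDom, h]
    have := Finset.card_le_card hsub
    rw [Finset.card_erase_of_mem (Finset.mem_univ d), Finset.card_univ, Fintype.card_fin] at this
    unfold prank at hrank
    omega
  · rwa [eq_shiftPerm_of_succAbove fun j => hext _ _ (h j),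
      shiftPerm_mem_alternatingGroup_iff] at hσ

lemma shiftPT_mem_AO_iff {d e : Fin (m + 1)} :
    shiftPT d e ∈ AO (m + 1) ↔ d.val % 2 = e.val % 2 :=
  ⟨fun h => mod_two_eq_of_inAI h.2 (shiftPT_succAbove d e), fun h =>
    ⟨orderPres_shiftPT d e, pInj_shiftPT d e,
      Or.inr ⟨shiftPerm d e, shiftPerm_mem_alternatingGroup_iff.2 h,
        extendsTo_shiftPerm_shiftPT d e⟩⟩⟩

end Parity

section Green

variable {m : ℕ}

lemma mod_two_eq_of_pDom_mul_mul {u b v : PT (m + 1)} (hu : u ∈ AO (m + 1)) {da db : Fin (m + 1)}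
    (ha : pDom (u * b * v) = Finset.univ.erase da) (hb : pDom b = Finset.univ.erase db) :
    da.val % 2 = db.val % 2 := by
  have hu_into : ∀ j, ∃ y, u (da.succAbove j) = some y ∧ y ≠ db := fun j => by
    have hj : da.succAbove j ∈ pDom (u * b * v) := by simp [ha, Fin.succAbove_ne]
    obtain ⟨y, hy, hyb⟩ := mem_pDom_mul.1 (pDom_mul_subset _ _ hj)
    exact ⟨y, hy, by simpa [hb] using hyb⟩
  choose g hg hgdb using hu_into
  have hgs := eq_succAbove_of_orderPres hu.1 hu.2.1 hg hgdb
  exact mod_two_eq_of_inAI hu.2 fun j => by rw [hg, hgs]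

lemma exists_mul_mul_eq {a b : PT (m + 1)} (ha : a ∈ AO (m + 1)) (hb : b ∈ AO (m + 1))
    {da db : Fin (m + 1)} (hda : pDom a = Finset.univ.erase da)
    (hdb : pDom b = Finset.univ.erase db) (hpar : da.val % 2 = db.val % 2) :
    ∃ u v, u ∈ AO (m + 1) ∧ v ∈ AO (m + 1) ∧ a = u * b * v := by
  obtain ⟨ea, rfl⟩ := exists_eq_shiftPT ha.1 ha.2.1 hda
  obtain ⟨eb, rfl⟩ := exists_eq_shiftPT hb.1 hb.2.1 hdb
  have hpa := shiftPT_mem_AO_iff.1 ha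
  have hpb := shiftPT_mem_AO_iff.1 hb
  exact ⟨shiftPT da db, shiftPT eb ea, shiftPT_mem_AO_iff.2 hpar,
    shiftPT_mem_AO_iff.2 (by omega), by rw [shiftPT_mul_shiftPT, shiftPT_mul_shiftPT]⟩

end Green

theorem stmt3_general {n : ℕ} (a b : PT n) (ha : a ∈ AO n) (hb : b ∈ AO n)
    (da db : Fin n) (hda : pDom a = Finset.univ.erase da) (hdb : pDom b = Finset.univ.erase db) :
    JRelIn (AO n) a b ↔ da.val % 2 = db.val % 2 := by
  obtain ⟨m, rfl⟩ : ∃ m, n = m + 1 := Nat.exists_eq_succ_of_ne_zero da.pos.ne'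
  constructor
  · rintro ⟨⟨u, v, hu, -, rfl⟩, -⟩
    exact mod_two_eq_of_pDom_mul_mul hu hda hdb
  · intro hpar
    exact ⟨exists_mul_mul_eq ha hb hda hdb hpar, exists_mul_mul_eq hb ha hdb hda hpar.symm⟩

/-- rank `n-1` elements of `AO_n` are `J`-related iff their missing domain
elements have the same parity. -/
theorem stmt3 {n : ℕ} (hn : 2 ≤ n) (a b : PT n) (ha : a ∈ AO n) (hb : b ∈ AO n)
    (da db : Fin n) (hda : pDom a = Finset.univ.erase da) (hdb : pDom b = Finset.univ.erase db) :
    JRelIn (AO n) a b ↔ da.val % 2 = db.val % 2 :=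
  stmt3_general a b ha hb da db hda hdb
end

section
/- For n ≡ 0 or 3 (mod 4), any two elements of AM_n of rank n-1 are J-related in AM_n. -/
open Equiv Equiv.Perm

lemma Equiv.mapsTo_compl_singleton {α β : Type*} (e : α ≃ β) (a : α) :
    Set.MapsTo e {a}ᶜ {e a}ᶜ :=
  fun _ hx => e.injective.ne hx

section MonotoneOff

variable {α : Type*} [LinearOrder α]

def MonotoneOff (σ : Perm α) (s : α) : Prop :=
  StrictMonoOn σ {s}ᶜ ∨ StrictAntiOn σ {s}ᶜ

namespace MonotoneOff

variable {σ τ : Perm α} {s : α}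

lemma trans (hσ : MonotoneOff σ s) (hτ : MonotoneOff τ (σ s)) :
    MonotoneOff (σ.trans τ) s := by
  have hmaps := σ.mapsTo_compl_singleton s
  rw [MonotoneOff, coe_trans]
  rcases hσ with hσ | hσ <;> rcases hτ with hτ | hτ
  · exact .inl (hτ.comp hσ hmaps)
  · exact .inr (hτ.comp_strictMonoOn hσ hmaps)
  · exact .inr (hτ.comp_strictAntiOn hσ hmaps)
  · exact .inl (hτ.comp hσ hmaps)

lemma symm (hσ : MonotoneOff σ s) : MonotoneOff σ.symm (σ s) := by
  have hmaps : Set.MapsTo σ.symm {σ s}ᶜ {s}ᶜ := by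
    simpa using σ.symm.mapsTo_compl_singleton (σ s)
  rcases hσ with hσ | hσ
  · refine .inl fun u hu v hv huv => ?_
    rwa [← hσ.lt_iff_lt (hmaps hu) (hmaps hv), apply_symm_apply, apply_symm_apply]
  · refine .inr fun u hu v hv huv => ?_
    rwa [← hσ.lt_iff_gt (hmaps hu) (hmaps hv), apply_symm_apply, apply_symm_apply]

end MonotoneOff

end MonotoneOff

section EvenMonotoneOff

variable {n : ℕ}

def EvenMonotoneOff (σ : Perm (Fin n)) (s : Fin n) : Prop :=
  σ ∈ alternatingGroup (Fin n) ∧ MonotoneOff σ s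

namespace EvenMonotoneOff

variable {σ τ : Perm (Fin n)} {s : Fin n}

lemma trans (hσ : EvenMonotoneOff σ s) (hτ : EvenMonotoneOff τ (σ s)) :
    EvenMonotoneOff (σ.trans τ) s :=
  ⟨mul_mem hτ.1 hσ.1, hσ.2.trans hτ.2⟩

lemma symm (hσ : EvenMonotoneOff σ s) : EvenMonotoneOff σ.symm (σ s) :=
  ⟨inv_mem hσ.1, hσ.2.symm⟩

end EvenMonotoneOff

end EvenMonotoneOff

section PermOff

variable {n : ℕ}

def permOff (σ : Perm (Fin n)) (s : Fin n) : PT n :=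
  fun x => if x = s then none else some (σ x)

@[simp]
lemma permOff_eq_some {σ : Perm (Fin n)} {s x a : Fin n} :
    permOff σ s x = some a ↔ x ≠ s ∧ σ x = a := by
  unfold permOff
  split_ifs <;> simp [*]

lemma permOff_mul_permOff (σ τ : Perm (Fin n)) (s : Fin n) :
    permOff σ s * permOff τ (σ s) = permOff (σ.trans τ) s := by
  funext x
  change (permOff σ s x).bind (permOff τ (σ s)) = permOff (σ.trans τ) s x
  by_cases hx : x = s
  · simp [permOff, hx]
  · simp [permOff, hx, σ.injective.ne hx]

lemma permOff_mem_AM {σ : Perm (Fin n)} {s : Fin n} (hσ : EvenMonotoneOff σ s) :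
    permOff σ s ∈ AM n := by
  have hext : extendsTo σ (permOff σ s) := fun x a hx => (permOff_eq_some.1 hx).2
  refine ⟨?_, fun x y a hx hy => σ.injective ((hext x a hx).trans (hext y a hy).symm),
    .inr ⟨σ, hσ.1, hext⟩⟩
  rcases hσ.2 with hmono | hanti
  · refine .inl fun x y a b hx hy hxy => ?_
    obtain ⟨hxs, rfl⟩ := permOff_eq_some.1 hx
    obtain ⟨hys, rfl⟩ := permOff_eq_some.1 hy
    exact hmono.monotoneOn hxs hys hxy
  · refine .inr fun x y a b hx hy hxy => ?_
    obtain ⟨hxs, rfl⟩ := permOff_eq_some.1 hx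
    obtain ⟨hys, rfl⟩ := permOff_eq_some.1 hy
    exact hanti.antitoneOn hxs hys hxy

lemma exists_mul_permOff_mul_eq {σ τ P : Perm (Fin n)} {s : Fin n}
    (hσ : EvenMonotoneOff σ s) (hτ : EvenMonotoneOff τ (P s)) (hP : EvenMonotoneOff P s) :
    ∃ u v, u ∈ AM n ∧ v ∈ AM n ∧ permOff σ s = u * permOff τ (P s) * v := by
  set U := P.trans τ
  have hU : EvenMonotoneOff U.symm (U s) := (hP.trans hτ).symm
  have hV : EvenMonotoneOff (U.symm.trans σ) (U s) := hU.trans (by simpa using hσ)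
  refine ⟨permOff P s, permOff (U.symm.trans σ) (U s), permOff_mem_AM hP, permOff_mem_AM hV,
    ?_⟩
  rw [permOff_mul_permOff, permOff_mul_permOff, ← trans_assoc, self_trans_symm, refl_trans]

lemma monotoneOff_of_isMonotonePT_permOff {σ : Perm (Fin n)} {s : Fin n}
    (h : isMonotonePT (permOff σ s)) : MonotoneOff σ s := by
  have hval (x : Fin n) (hx : x ∈ ({s}ᶜ : Set (Fin n))) : permOff σ s x = some (σ x) :=
    permOff_eq_some.2 ⟨hx, rfl⟩
  rcases h with h | h
  · exact .inl fun x hx y hy hxy =>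
      (h x y _ _ (hval x hx) (hval y hy) hxy.le).lt_of_ne (σ.injective.ne hxy.ne)
  · exact .inr fun x hx y hy hxy =>
      (h x y _ _ (hval x hx) (hval y hy) hxy.le).lt_of_ne (σ.injective.ne hxy.ne')

end PermOff

lemma exists_eq_none_iff_of_prank_eq {m : ℕ} {f : PT (m + 1)} (hf : prank f = m) :
    ∃ s, ∀ x, f x = none ↔ x = s := by
  obtain ⟨s, hs⟩ : ∃ s, (pDom f)ᶜ = {s} := by
    rw [← Finset.card_eq_one, Finset.card_compl, Fintype.card_fin, ← prank, hf]
    omega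
  exact ⟨s, fun x => by simpa [pDom] using Finset.ext_iff.1 hs x⟩

lemma exists_eq_permOff_of_mem_AM {m : ℕ} {f : PT (m + 1)} (hf : f ∈ AM (m + 1))
    (hr : prank f = m) :
    ∃ s σ, EvenMonotoneOff σ s ∧ f = permOff σ s := by
  obtain ⟨hmono, -, hAI⟩ := hf
  obtain ⟨s, hs⟩ := exists_eq_none_iff_of_prank_eq hr
  obtain ⟨σ, hσ, hext⟩ : ∃ σ ∈ alternatingGroup (Fin (m + 1)), extendsTo σ f := by
    refine hAI.resolve_left ?_
    omega
  have hf : f = permOff σ s := by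
    funext x
    by_cases hx : x = s
    · rw [(hs x).2 hx, permOff, if_pos hx]
    · obtain ⟨a, ha⟩ := Option.ne_none_iff_exists'.1 (mt (hs x).1 hx)
      rw [ha, permOff, if_neg hx, hext x a ha]
  subst hf
  exact ⟨s, σ, ⟨hσ, monotoneOff_of_isMonotonePT_permOff hmono⟩, rfl⟩

section SignRev

lemma revPerm_succ (n : ℕ) :
    (Fin.revPerm : Perm (Fin (n + 1))) =
      decomposeFin.symm (0, Fin.revPerm) * finRotate (n + 1) := by
  ext x
  induction x using Fin.lastCases with
  | last => simp
  | cast i => simp [Fin.rev_castSucc]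

lemma sign_revPerm_succ (n : ℕ) :
    sign (Fin.revPerm : Perm (Fin (n + 1))) = (-1) ^ n * sign (Fin.revPerm : Perm (Fin n)) := by
  rw [revPerm_succ, map_mul, decomposeFin.symm_sign, sign_finRotate]
  simp [mul_comm]

lemma sign_revPerm : ∀ n : ℕ, sign (Fin.revPerm : Perm (Fin n)) = (-1) ^ (n / 2)
  | 0 => rfl
  | 1 => rfl
  | n + 2 => by
    rw [sign_revPerm_succ, sign_revPerm_succ, sign_revPerm n, ← mul_assoc, ← pow_add,
      Odd.neg_one_pow ⟨n, by ring⟩, show (n + 2) / 2 = n / 2 + 1 by omega, pow_succ, mul_comm]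

end SignRev

section Holes

variable {m : ℕ}

def shiftHole (s t : Fin (m + 1)) : Perm (Fin (m + 1)) :=
  (Fin.cycleRange s).trans (Fin.cycleRange t).symm

@[simp]
lemma shiftHole_apply_self (s t : Fin (m + 1)) : shiftHole s t s = t := by
  rw [shiftHole, trans_apply, Fin.cycleRange_self, symm_apply_eq, Fin.cycleRange_self]

lemma shiftHole_apply_succAbove (s t : Fin (m + 1)) (i : Fin m) :
    shiftHole s t (s.succAbove i) = t.succAbove i := by
  rw [shiftHole, trans_apply, Fin.cycleRange_succAbove, symm_apply_eq, Fin.cycleRange_succAbove]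

lemma strictMonoOn_shiftHole (s t : Fin (m + 1)) : StrictMonoOn (shiftHole s t) {s}ᶜ := by
  intro x hx y hy hxy
  obtain ⟨i, rfl⟩ := Fin.exists_succAbove_eq hx
  obtain ⟨j, rfl⟩ := Fin.exists_succAbove_eq hy
  rw [shiftHole_apply_succAbove, shiftHole_apply_succAbove]
  exact Fin.succAbove_lt_succAbove_iff.2 (Fin.succAbove_lt_succAbove_iff.1 hxy)

lemma sign_shiftHole (s t : Fin (m + 1)) :
    sign (shiftHole s t) = (-1) ^ ((s : ℕ) + t) := by
  rw [shiftHole, ← Perm.mul_def, map_mul, sign_symm, Fin.sign_cycleRange, Fin.sign_cycleRange,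
    pow_add, mul_comm]

def flipHole (s t : Fin (m + 1)) : Perm (Fin (m + 1)) :=
  (shiftHole s t.rev).trans Fin.revPerm

@[simp]
lemma flipHole_apply_self (s t : Fin (m + 1)) : flipHole s t s = t := by
  simp [flipHole]

lemma strictAntiOn_flipHole (s t : Fin (m + 1)) : StrictAntiOn (flipHole s t) {s}ᶜ :=
  fun _ hx _ hy hxy => Fin.rev_lt_rev.2 (strictMonoOn_shiftHole s t.rev hx hy hxy)

lemma sign_flipHole (s t : Fin (m + 1)) :
    sign (flipHole s t) = (-1) ^ ((m + 1) / 2 + s + (m - t)) := by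
  rw [flipHole, ← Perm.mul_def, map_mul, sign_revPerm, sign_shiftHole, Fin.val_rev, ← pow_add,
    add_assoc]
  congr 2
  omega

lemma exists_evenMonotoneOff_apply_eq (hm : (m + 1) % 4 = 0 ∨ (m + 1) % 4 = 3)
    (s t : Fin (m + 1)) : ∃ P, EvenMonotoneOff P s ∧ P s = t := by
  by_cases hst : Even ((s : ℕ) + t)
  · refine ⟨shiftHole s t, ⟨?_, .inl (strictMonoOn_shiftHole s t)⟩, shiftHole_apply_self s t⟩
    rw [mem_alternatingGroup, sign_shiftHole, hst.neg_one_pow]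
  · refine ⟨flipHole s t, ⟨?_, .inr (strictAntiOn_flipHole s t)⟩, flipHole_apply_self s t⟩
    rw [mem_alternatingGroup, sign_flipHole]
    apply Even.neg_one_pow
    rw [Nat.not_even_iff] at hst
    rw [Nat.even_iff]
    have := t.isLt
    omega

end Holes

lemma exists_mul_mul_eq_of_prank_eq {m : ℕ} (hm : (m + 1) % 4 = 0 ∨ (m + 1) % 4 = 3)
    {a b : PT (m + 1)} (ha : a ∈ AM (m + 1)) (hb : b ∈ AM (m + 1))
    (hra : prank a = m) (hrb : prank b = m) :
    ∃ u v, u ∈ AM (m + 1) ∧ v ∈ AM (m + 1) ∧ a = u * b * v := by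
  obtain ⟨s, σ, hσ, rfl⟩ := exists_eq_permOff_of_mem_AM ha hra
  obtain ⟨t, τ, hτ, rfl⟩ := exists_eq_permOff_of_mem_AM hb hrb
  obtain ⟨P, hP, rfl⟩ := exists_evenMonotoneOff_apply_eq hm s t
  exact exists_mul_permOff_mul_eq hσ hτ hP

/-- for `n ≡ 0, 3 (mod 4)`, any two rank-`n-1` elements of `AM_n` are
`J`-related in `AM_n`. -/
theorem stmt10 {n : ℕ} (hn : 2 ≤ n) (h4 : n % 4 = 0 ∨ n % 4 = 3)
    (a b : PT n) (ha : a ∈ AM n) (hb : b ∈ AM n)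
    (hra : prank a = n - 1) (hrb : prank b = n - 1) :
    JRelIn (AM n) a b := by
  obtain ⟨m, rfl⟩ : ∃ m, n = m + 1 := ⟨n - 1, by omega⟩
  rw [Nat.add_sub_cancel] at hra hrb
  exact ⟨exists_mul_mul_eq_of_prank_eq h4 ha hb hra hrb,
    exists_mul_mul_eq_of_prank_eq h4 hb ha hrb hra⟩
end
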